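/- An archimedean linearly ordered abelian group admits an injective order-preserving group homomorphism into the additive group of real numbers (Hölder's theorem). -/

import Mathlib

theorem holder_embedding_into_reals
    (Γ : Type*) [AddCommGroup Γ] [LinearOrder Γ] [IsOrderedAddMonoid Γ] [Archimedean Γ] :
    ∃ f : Γ →+ ℝ, Function.Injective f ∧ StrictMono f := by
  obtain ⟨f, hf⟩ := Archimedean.exists_orderAddMonoidHom_real_injective Γ
  exact ⟨f, hf, (OrderHomClass.mono f).strictMono_of_injective hf⟩
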